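/- arXiv:1701.06951 — 3 statements merged into one kernel-verified Lean document; each statement's English description precedes it below -/
import Mathlib

section
/- A square irreducible substochastic matrix B is convergent (i.e. B^k → 0 as k → ∞) if and only if Ĵ(B) is nonempty. -/
open Matrix Filter Finset

/-- A substochastic matrix: nonnegative entries, row sums at most one. -/
def IsSubstochastic {m n : Type*} [Fintype n] (B : Matrix m n ℝ) : Prop :=
  (∀ i j, 0 ≤ B i j) ∧ ∀ i, ∑ j, B i j ≤ 1

/-- Ĵ(B): the set of rows with row-sum strictly less than one. -/
def Jhat {m n : Type*} [Fintype n] (B : Matrix m n ℝ) : Set m :=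
  {i | ∑ j, B i j < 1}

/-- There is a walk of length `ℓ` (a nonempty sequence of `ℓ` consecutive edges) in the
digraph of `A` (edge `i → j` iff `A i j ≠ 0`) starting at `i` and ending in `S`. -/
def IsWalkTo {V : Type*} (A : Matrix V V ℝ) (i : V) (S : Set V) (ℓ : ℕ) : Prop :=
  1 ≤ ℓ ∧ ∃ w : ℕ → V, w 0 = i ∧ (∀ k < ℓ, A (w k) (w (k + 1)) ≠ 0) ∧ w ℓ ∈ S

/-- The index of contraction `ĉon B ∈ ℕ∞`:
`max(0, sup_{i ∉ Ĵ(B)} inf_{p ∈ P̂ᵢ(B)} |p|)` with `inf ∅ = ∞`, `sup ∅ = -∞`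
(in `ℕ∞` the empty supremum is `0`, matching `max(0, -∞) = 0`). -/
noncomputable def conHat {V : Type*} [Fintype V] (B : Matrix V V ℝ) : ℕ∞ :=
  ⨆ i ∈ (Jhat B)ᶜ, ⨅ ℓ ∈ {ℓ : ℕ | IsWalkTo B i (Jhat B) ℓ}, (ℓ : ℕ∞)

/-- The maximum absolute row-sum norm `‖·‖_∞`. -/
noncomputable def rowSumNorm {m n : Type*} [Fintype n] (B : Matrix m n ℝ) : ℝ :=
  ⨆ i, ∑ j, |B i j|

/-- `B` is convergent: `Bᵏ → 0` as `k → ∞`. -/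
def IsConvergent {V : Type*} [Fintype V] [DecidableEq V] (B : Matrix V V ℝ) : Prop :=
  Tendsto (fun k : ℕ => B ^ k) atTop (nhds 0)

/-- `B` is irreducible: its digraph is strongly connected, i.e. for every pair of
vertices `i, j` there is a walk from `i` to `j`. -/
def IsIrreducibleMat {V : Type*} (B : Matrix V V ℝ) : Prop :=
  ∀ i j : V, ∃ ℓ : ℕ, 1 ≤ ℓ ∧
    ∃ w : ℕ → V, w 0 = i ∧ w ℓ = j ∧ ∀ k < ℓ, B (w k) (w (k + 1)) ≠ 0

/-!
Row sums of `B ^ k` can only decrease with `k`. If `Ĵ(B) = ∅`, then `B` is row-stochastic, so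
every `B ^ k` fixes the all-ones vector and cannot tend to `0`. Otherwise, a walk of length `ℓ`
from `i` into `Ĵ(B)` makes row `i` of `B ^ (ℓ + 1)` sum to less than one; by irreducibility some
power `B ^ N` has all row sums below one, i.e. `‖B ^ N‖_∞ < 1`, which forces `B ^ k → 0`.
-/

theorem tendsto_pow_atTop_nhds_zero_of_norm_pow_lt_one {R : Type*} [SeminormedRing R] {x : R}
    {N : ℕ} (hN : 0 < N) (h : ‖x ^ N‖ < 1) :
    Tendsto (fun k : ℕ ↦ x ^ k) atTop (nhds 0) := by
  have hsplit : ∀ k, x ^ k = x ^ (k % N) * (x ^ N) ^ (k / N) := fun k => by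
    rw [← pow_mul, ← pow_add, Nat.mod_add_div]
  have hbdd : IsBoundedUnder (· ≤ ·) atTop (norm ∘ fun k ↦ x ^ (k % N)) :=
    isBoundedUnder_of ⟨∑ r ∈ range N, ‖x ^ r‖, fun k =>
      single_le_sum (fun r _ => norm_nonneg (x ^ r)) (mem_range.2 (Nat.mod_lt k hN))⟩
  exact (tendsto_congr hsplit).2 (isBoundedUnder_le_mul_tendsto_zero hbdd
    ((tendsto_pow_atTop_nhds_zero_of_norm_lt_one h).comp (Nat.tendsto_div_const_atTop hN.ne')))

namespace Matrix

variable {l m n : Type*} [Fintype m] [Fintype n]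

theorem sum_mul_apply {α : Type*} [NonUnitalNonAssocSemiring α] (A : Matrix l m α)
    (B : Matrix m n α) (i : l) :
    ∑ j, (A * B) i j = ∑ k, A i k * ∑ j, B k j := by
  simp only [mul_apply, mul_sum]
  exact sum_comm

theorem sum_mul_apply_le {A : Matrix l m ℝ} {B : Matrix m n ℝ} {i : l} (hA : ∀ k, 0 ≤ A i k)
    (hB : ∀ k, ∑ j, B k j ≤ 1) : ∑ j, (A * B) i j ≤ ∑ k, A i k := by
  rw [sum_mul_apply]
  exact sum_le_sum fun k _ => mul_le_of_le_one_right (hA k) (hB k)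

theorem sum_mul_apply_lt {A : Matrix l m ℝ} {B : Matrix m n ℝ} {i : l} {k : m}
    (hA : ∀ k, 0 ≤ A i k) (hB : ∀ k, ∑ j, B k j ≤ 1) (hik : A i k ≠ 0) (hk : ∑ j, B k j < 1) :
    ∑ j, (A * B) i j < ∑ k, A i k := by
  rw [sum_mul_apply]
  refine sum_lt_sum (fun k _ => mul_le_of_le_one_right (hA k) (hB k)) ⟨k, mem_univ k, ?_⟩
  exact mul_lt_of_lt_one_right ((hA k).lt_of_ne' hik) hk

end Matrix

section Substochastic

variable {l m n V : Type*} [Fintype m] [Fintype n] [Fintype V] [DecidableEq V]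

theorem IsSubstochastic.mul {A : Matrix l m ℝ} {B : Matrix m n ℝ} (hA : IsSubstochastic A)
    (hB : IsSubstochastic B) : IsSubstochastic (A * B) :=
  ⟨fun i j => sum_nonneg fun k _ => mul_nonneg (hA.1 i k) (hB.1 k j),
    fun i => (sum_mul_apply_le (hA.1 i) hB.2).trans (hA.2 i)⟩

theorem isSubstochastic_one : IsSubstochastic (1 : Matrix V V ℝ) :=
  ⟨fun i j => by by_cases h : i = j <;> simp [one_apply, h], fun i => by simp [one_apply]⟩

theorem IsSubstochastic.pow {B : Matrix V V ℝ} (hB : IsSubstochastic B) :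
    ∀ k : ℕ, IsSubstochastic (B ^ k)
  | 0 => isSubstochastic_one
  | k + 1 => (hB.pow k).mul hB

theorem Jhat_subset_Jhat_mul {A : Matrix l m ℝ} {B : Matrix m n ℝ} (hA : ∀ i j, 0 ≤ A i j)
    (hB : ∀ k, ∑ j, B k j ≤ 1) : Jhat A ⊆ Jhat (A * B) :=
  fun i hi => (sum_mul_apply_le (hA i) hB).trans_lt hi

theorem mem_Jhat_mul_of_apply_ne_zero {A : Matrix l m ℝ} {B : Matrix m n ℝ} {i : l} {k : m}
    (hA : IsSubstochastic A) (hB : ∀ k, ∑ j, B k j ≤ 1) (hik : A i k ≠ 0) (hk : k ∈ Jhat B) :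
    i ∈ Jhat (A * B) :=
  (sum_mul_apply_lt (hA.1 i) hB hik hk).trans_le (hA.2 i)

theorem monotone_Jhat_pow {B : Matrix V V ℝ} (hB : IsSubstochastic B) :
    Monotone fun k : ℕ => Jhat (B ^ k) :=
  monotone_nat_of_le_succ fun k => by
    simpa only [pow_succ] using Jhat_subset_Jhat_mul (hB.pow k).1 hB.2

theorem mem_Jhat_pow_of_walk {B : Matrix V V ℝ} (hB : IsSubstochastic B) :
    ∀ (ℓ : ℕ) (w : ℕ → V), (∀ k < ℓ, B (w k) (w (k + 1)) ≠ 0) → w ℓ ∈ Jhat B →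
      w 0 ∈ Jhat (B ^ (ℓ + 1))
  | 0, _, _, hw => by simpa using hw
  | ℓ + 1, w, hwalk, hw => by
    have hnext : w 1 ∈ Jhat (B ^ (ℓ + 1)) :=
      mem_Jhat_pow_of_walk hB ℓ (fun k => w (k + 1)) (fun k hk => hwalk (k + 1) (by omega)) hw
    rw [pow_succ']
    exact mem_Jhat_mul_of_apply_ne_zero hB (hB.pow _).2 (hwalk 0 (by omega)) hnext

theorem exists_Jhat_pow_eq_univ {B : Matrix V V ℝ} (hB : IsSubstochastic B)
    (hirr : IsIrreducibleMat B) (hJ : (Jhat B).Nonempty) :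
    ∃ N, 0 < N ∧ Jhat (B ^ N) = Set.univ := by
  obtain ⟨j, hj⟩ := hJ
  choose ℓ _ w hw0 hwℓ hwalk using fun i => hirr i j
  refine ⟨univ.sup ℓ + 1, Nat.succ_pos _, Set.eq_univ_of_forall fun i => ?_⟩
  have hi := mem_Jhat_pow_of_walk hB (ℓ i) (w i) (hwalk i) ((hwℓ i).symm ▸ hj)
  rw [hw0] at hi
  exact monotone_Jhat_pow hB (Nat.succ_le_succ (le_sup (mem_univ i))) hi

theorem IsSubstochastic.mem_rowStochastic {B : Matrix V V ℝ} (hB : IsSubstochastic B)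
    (hJ : Jhat B = ∅) : B ∈ rowStochastic ℝ V :=
  mem_rowStochastic_iff_sum.2
    ⟨hB.1, fun i => (hB.2 i).antisymm (not_lt.1 fun hi => hJ.subset hi)⟩

theorem not_isConvergent_of_mem_rowStochastic [Nonempty V] {B : Matrix V V ℝ}
    (hB : B ∈ rowStochastic ℝ V) : ¬ IsConvergent B := by
  intro hconv
  have hlim : Tendsto (fun k : ℕ => B ^ k *ᵥ 1) atTop (nhds (0 *ᵥ (1 : V → ℝ))) :=
    ((continuous_id.matrix_mulVec continuous_const).tendsto 0).comp hconv
  simp only [fun k => one_vecMul_of_mem_rowStochastic (pow_mem hB k), zero_mulVec] at hlim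
  exact one_ne_zero (tendsto_nhds_unique tendsto_const_nhds hlim)

attribute [local instance] Matrix.linftyOpNormedAddCommGroup in
theorem norm_lt_one_of_Jhat_eq_univ {A : Matrix m n ℝ} (hA : ∀ i j, 0 ≤ A i j)
    (hJ : Jhat A = Set.univ) : ‖A‖ < 1 := by
  rw [linfty_opNorm_def, ← NNReal.coe_one, NNReal.coe_lt_coe, Finset.sup_lt_iff one_pos]
  intro i _
  rw [← NNReal.coe_lt_coe, NNReal.coe_sum, NNReal.coe_one]
  simp only [coe_nnnorm, Real.norm_eq_abs, abs_of_nonneg (hA i _)]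
  exact hJ.symm.subset (Set.mem_univ i)

attribute [local instance] Matrix.linftyOpNormedAddCommGroup Matrix.linftyOpSemiNormedRing in
theorem IsSubstochastic.isConvergent_of_Jhat_pow_eq_univ {B : Matrix V V ℝ}
    (hB : IsSubstochastic B) {N : ℕ} (hN : 0 < N) (hJ : Jhat (B ^ N) = Set.univ) :
    IsConvergent B :=
  tendsto_pow_atTop_nhds_zero_of_norm_pow_lt_one hN (norm_lt_one_of_Jhat_eq_univ (hB.pow N).1 hJ)

theorem IsSubstochastic.isConvergent_iff [Nonempty V] {B : Matrix V V ℝ}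
    (hB : IsSubstochastic B) (hirr : IsIrreducibleMat B) :
    IsConvergent B ↔ (Jhat B).Nonempty := by
  refine ⟨fun hconv => ?_, fun hJ => ?_⟩
  · by_contra hJ
    exact not_isConvergent_of_mem_rowStochastic
      (hB.mem_rowStochastic (Set.not_nonempty_iff_eq_empty.1 hJ)) hconv
  · obtain ⟨N, hN, hJN⟩ := exists_Jhat_pow_eq_univ hB hirr hJ
    exact hB.isConvergent_of_Jhat_pow_eq_univ hN hJN

end Substochastic

theorem stmt4 {n : ℕ} (hn : 0 < n) (B : Matrix (Fin n) (Fin n) ℝ)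
    (hB : IsSubstochastic B) (hirr : IsIrreducibleMat B) :
    IsConvergent B ↔ (Jhat B).Nonempty :=
  have : Nonempty (Fin n) := ⟨⟨0, hn⟩⟩
  hB.isConvergent_iff hirr
end

section
/- A square irreducible weakly diagonally dominant L-matrix A is a nonsingular M-matrix (equivalently, A is invertible with entrywise nonnegative inverse) if and only if J(A) is nonempty. -/
open Matrix Filter Finset

/-- `J(A)`: the set of rows of a square matrix that are strictly diagonally dominant. -/
def Jdom {n : Type*} [Fintype n] [DecidableEq n] (A : Matrix n n ℝ) : Set n :=
  {i | ∑ j ∈ Finset.univ.erase i, |A i j| < |A i i|}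

/-- `A` is weakly diagonally dominant (w.d.d.). -/
def IsWDD {n : Type*} [Fintype n] [DecidableEq n] (A : Matrix n n ℝ) : Prop :=
  ∀ i, ∑ j ∈ Finset.univ.erase i, |A i j| ≤ |A i i|

/-- The index of connectivity `con A ∈ ℕ∞`. -/
noncomputable def conn {n : Type*} [Fintype n] [DecidableEq n] (A : Matrix n n ℝ) : ℕ∞ :=
  ⨆ i ∈ (Jdom A)ᶜ, ⨅ ℓ ∈ {ℓ : ℕ | IsWalkTo A i (Jdom A) ℓ}, (ℓ : ℕ∞)

/-- `A` is weakly chained diagonally dominant (w.c.d.d.). -/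
def IsWCDD {n : Type*} [Fintype n] [DecidableEq n] (A : Matrix n n ℝ) : Prop :=
  IsWDD A ∧ (Jdom A).Nonempty ∧ ∀ i ∉ Jdom A, ∃ ℓ : ℕ, IsWalkTo A i (Jdom A) ℓ

lemma key_mono {n : ℕ} (A : Matrix (Fin n) (Fin n) ℝ)
    (hZ : ∀ i j, i ≠ j → A i j ≤ 0) (hdiag : ∀ i, 0 < A i i)
    (hwdd : IsWDD A) (hirr : IsIrreducibleMat A) (hJ : (Jdom A).Nonempty)
    (x : Fin n → ℝ) (hx : ∀ i, 0 ≤ (A *ᵥ x) i) : ∀ i, 0 ≤ x i := by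
  by_contra hcon
  push_neg at hcon
  obtain ⟨i₀, hi₀⟩ := hcon
  have hne : (Finset.univ : Finset (Fin n)).Nonempty := ⟨i₀, Finset.mem_univ i₀⟩
  set m : ℝ := Finset.univ.inf' hne x with hm_def
  have hmle : ∀ j, m ≤ x j := fun j => Finset.inf'_le x (Finset.mem_univ j)
  have hm : m < 0 := lt_of_le_of_lt (hmle i₀) hi₀
  -- the key claim
  have claim : ∀ i, x i = m → i ∉ Jdom A ∧ ∀ j, A i j ≠ 0 → x j = m := by
    intro i hxi
    have hterm : ∀ j ∈ (Finset.univ : Finset (Fin n)), A i j * x j ≤ A i j * m := by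
      intro j _
      rcases eq_or_ne j i with rfl | hji
      · rw [hxi]
      · exact mul_le_mul_of_nonpos_left (hmle j) (hZ i j (Ne.symm hji))
    have hsum : ∑ j, A i j * x j ≤ ∑ j, A i j * m := Finset.sum_le_sum hterm
    have hrowsum : 0 ≤ ∑ j, A i j := by
      have h1 : ∑ j, A i j = A i i + ∑ j ∈ Finset.univ.erase i, A i j :=
        (Finset.add_sum_erase _ _ (Finset.mem_univ i)).symm
      have h2 : ∑ j ∈ Finset.univ.erase i, A i j
          = -∑ j ∈ Finset.univ.erase i, |A i j| := by
        rw [← Finset.sum_neg_distrib]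
        refine Finset.sum_congr rfl fun j hj => ?_
        rw [abs_of_nonpos (hZ i j (Ne.symm (Finset.ne_of_mem_erase hj)))]
        ring
      have h3 := hwdd i
      rw [abs_of_pos (hdiag i)] at h3
      rw [h1, h2]
      linarith
    have hsm : ∑ j, A i j * m = (∑ j, A i j) * m := (Finset.sum_mul _ _ _).symm
    have hnp : (∑ j, A i j) * m ≤ 0 := mul_nonpos_of_nonneg_of_nonpos hrowsum hm.le
    have hxm : (A *ᵥ x) i = ∑ j, A i j * x j := by
      simp [Matrix.mulVec, dotProduct]
    have h0 : 0 ≤ ∑ j, A i j * x j := hxm ▸ hx i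
    have heq : ∑ j, A i j * x j = ∑ j, A i j * m := by
      refine le_antisymm hsum ?_
      rw [hsm]; linarith
    have heq0 : (∑ j, A i j) * m = 0 := by
      rw [← hsm, ← heq]
      refine le_antisymm ?_ h0
      rw [heq, hsm]; exact hnp
    have hrow0 : ∑ j, A i j = 0 := by
      rcases mul_eq_zero.mp heq0 with h | h
      · exact h
      · exact absurd h hm.ne
    constructor
    · intro hiJ
      have h1 : ∑ j, A i j = A i i + ∑ j ∈ Finset.univ.erase i, A i j :=
        (Finset.add_sum_erase _ _ (Finset.mem_univ i)).symm
      have h2 : ∑ j ∈ Finset.univ.erase i, A i j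
          = -∑ j ∈ Finset.univ.erase i, |A i j| := by
        rw [← Finset.sum_neg_distrib]
        refine Finset.sum_congr rfl fun j hj => ?_
        rw [abs_of_nonpos (hZ i j (Ne.symm (Finset.ne_of_mem_erase hj)))]
        ring
      have hlt : ∑ j ∈ Finset.univ.erase i, |A i j| < |A i i| := hiJ
      rw [abs_of_pos (hdiag i)] at hlt
      rw [h1, h2] at hrow0
      linarith
    · intro j hAij
      have := (Finset.sum_eq_sum_iff_of_le hterm).mp heq j (Finset.mem_univ j)
      exact mul_left_cancel₀ hAij this
  -- propagate along a walk to Jdom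
  obtain ⟨is, his, hxis⟩ := Finset.exists_mem_eq_inf' hne x
  obtain ⟨jJ, hjJ⟩ := hJ
  obtain ⟨ℓ, hℓ1, w, hw0, hwℓ, hwe⟩ := hirr is jJ
  have hwalk : ∀ k, k ≤ ℓ → x (w k) = m := by
    intro k
    induction k with
    | zero => intro _; rw [hw0]; exact hxis.symm
    | succ k ih =>
      intro hk
      have hk' : k < ℓ := Nat.lt_of_succ_le hk
      exact (claim (w k) (ih hk'.le)).2 (w (k + 1)) (hwe k hk')
  have hxj : x jJ = m := hwℓ ▸ hwalk ℓ le_rfl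
  exact (claim jJ hxj).1 hjJ

theorem stmt17 {n : ℕ} (hn : 0 < n) (A : Matrix (Fin n) (Fin n) ℝ)
    (hZ : ∀ i j, i ≠ j → A i j ≤ 0) (hdiag : ∀ i, 0 < A i i)
    (hwdd : IsWDD A) (hirr : IsIrreducibleMat A) :
    (A.det ≠ 0 ∧ ∀ i j, 0 ≤ A⁻¹ i j) ↔ (Jdom A).Nonempty := by

  constructor
  · rintro ⟨hdet, _⟩
    by_contra hJ
    rw [Set.not_nonempty_iff_eq_empty] at hJ
    have hrow0 : ∀ i, ∑ j, A i j = 0 := by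
      intro i
      have hnot : i ∉ Jdom A := by rw [hJ]; exact Set.notMem_empty i
      have heq : ∑ j ∈ Finset.univ.erase i, |A i j| = A i i := by
        have h1 := hwdd i
        rw [abs_of_pos (hdiag i)] at h1
        have h2 : ¬ (∑ j ∈ Finset.univ.erase i, |A i j| < |A i i|) := hnot
        rw [abs_of_pos (hdiag i)] at h2
        exact le_antisymm h1 (not_lt.mp h2)
      have h2 : ∑ j ∈ Finset.univ.erase i, A i j
          = -∑ j ∈ Finset.univ.erase i, |A i j| := by
        rw [← Finset.sum_neg_distrib]
        refine Finset.sum_congr rfl fun j hj => ?_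
        rw [abs_of_nonpos (hZ i j (Ne.symm (Finset.ne_of_mem_erase hj)))]
        ring
      rw [← Finset.add_sum_erase _ _ (Finset.mem_univ i), h2, heq]
      ring
    have hmul : A *ᵥ (fun _ => (1 : ℝ)) = 0 := by
      funext i
      simp only [Matrix.mulVec, dotProduct, mul_one]
      exact hrow0 i
    have := Matrix.eq_zero_of_mulVec_eq_zero hdet hmul
    have h1 : (fun _ => (1 : ℝ)) (⟨0, hn⟩ : Fin n) = 0 := by rw [this]; rfl
    simp at h1
  · intro hJ
    have hdet : A.det ≠ 0 := by
      intro hdet0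
      obtain ⟨v, hv0, hv⟩ := (Matrix.exists_mulVec_eq_zero_iff).mpr hdet0
      have h1 : ∀ i, 0 ≤ v i :=
        key_mono A hZ hdiag hwdd hirr hJ v (fun i => by rw [hv]; rfl)
      have h2 : ∀ i, 0 ≤ (-v) i := by
        refine key_mono A hZ hdiag hwdd hirr hJ (-v) (fun i => ?_)
        rw [Matrix.mulVec_neg, hv]
        simp
      apply hv0
      funext i
      have := h2 i
      simp only [Pi.neg_apply, neg_nonneg] at this
      exact le_antisymm this (h1 i)
    refine ⟨hdet, fun i j => ?_⟩
    have hunit : IsUnit A.det := isUnit_iff_ne_zero.mpr hdet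
    have hAAinv : A * A⁻¹ = 1 := Matrix.mul_nonsing_inv A hunit
    have hcol : A *ᵥ (fun k => A⁻¹ k j) = fun i => (1 : Matrix (Fin n) (Fin n) ℝ) i j := by
      funext i
      have : (A * A⁻¹) i j = (A *ᵥ fun k => A⁻¹ k j) i := by
        simp [Matrix.mul_apply, Matrix.mulVec, dotProduct]
      rw [← this, hAAinv]
    have := key_mono A hZ hdiag hwdd hirr hJ (fun k => A⁻¹ k j)
      (fun i => by
        rw [hcol]
        by_cases h : i = j <;> simp [Matrix.one_apply, h])
    exact this i
end

section
/- Let n be a positive integer and let (B_k)_{k≥1} be a sequence of n×n substochastic matrices such that B_1 is convergent (i.e. B_1^k → 0 as k → ∞) and, for every k, Ĵ(B_k) = Ĵ(B_1) and the digraph of B_k equals the digraph of B_1. Then the generalized index of contraction satisfies ĉon(B_1, B_2, …) < n. -/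
open Matrix Filter Finset

/-- Lengths of walks in the sequence of digraphs of the square matrices `(B_k)`, starting
at vertex `i`: the `k`-th edge `(i_k, i_{k+1})` must satisfy `(B_k)_{i_k i_{k+1}} ≠ 0`,
and the last vertex must lie in `Ĵ(B_{|p|+1})`. -/
def seqWalkLengthsSq {n : ℕ} (B : ℕ → Matrix (Fin n) (Fin n) ℝ) (i : Fin n) : Set ℕ :=
  {ℓ : ℕ | 1 ≤ ℓ ∧ ∃ w : ℕ → Fin n, w 0 = i ∧
    (∀ k < ℓ, B k (w k) (w (k + 1)) ≠ 0) ∧ w ℓ ∈ Jhat (B ℓ)}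

/-- The generalized index of contraction `ĉon (B_1, B_2, …) ∈ ℕ∞` of a sequence of
square substochastic matrices. -/
noncomputable def conHatSeqSq {n : ℕ} (B : ℕ → Matrix (Fin n) (Fin n) ℝ) : ℕ∞ :=
  ⨆ i ∈ (Jhat (B 0))ᶜ, ⨅ ℓ ∈ seqWalkLengthsSq B i, (ℓ : ℕ∞)

/-!
Every vertex `i ∉ Ĵ(B₁)` reaches `Ĵ(B₁)` in the digraph of `B₁`: otherwise the vertices that
cannot reach `Ĵ(B₁)` form a set closed under edges on which all row sums are one, so the rows of
`B₁ᵏ` indexed by it keep row sum one and `B₁ᵏ ↛ 0`. A shortest such walk visits no vertex twice,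
hence has length at most `n - 1`. Since all `B_k` share the digraph and `Ĵ` of `B₁`, this walk is
also a walk in the sequence `(B_k)` ending in `Ĵ(B_{|p|+1})`.
-/

section Walks

variable {V : Type*} (r : V → V → Prop)

def ReachesIn (ℓ : ℕ) (i : V) (S : Set V) : Prop :=
  ∃ w : ℕ → V, w 0 = i ∧ (∀ k < ℓ, r (w k) (w (k + 1))) ∧ w ℓ ∈ S

variable {r}

theorem ReachesIn.zero {i : V} {S : Set V} (hi : i ∈ S) : ReachesIn r 0 i S :=
  ⟨fun _ => i, rfl, fun _ hk => absurd hk (Nat.not_lt_zero _), hi⟩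

theorem ReachesIn.cons {ℓ : ℕ} {i j : V} {S : Set V} (hij : r i j) (h : ReachesIn r ℓ j S) :
    ReachesIn r (ℓ + 1) i S := by
  obtain ⟨w, hw0, hwr, hwS⟩ := h
  refine ⟨fun k => if k = 0 then i else w (k - 1), rfl, fun k hk => ?_, hwS⟩
  rcases k with _ | k
  · simpa [hw0] using hij
  · simpa using hwr k (by omega)

theorem ReachesIn.of_loop {ℓ a d : ℕ} {i : V} {S : Set V} {w : ℕ → V} (hw0 : w 0 = i)
    (hwr : ∀ k < ℓ, r (w k) (w (k + 1))) (hwS : w ℓ ∈ S) (had : a + d ≤ ℓ)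
    (hloop : w a = w (a + d)) : ReachesIn r (ℓ - d) i S := by
  refine ⟨fun k => w (if k < a then k else k + d), ?_, fun k hk => ?_, ?_⟩
  · rcases Nat.eq_zero_or_pos a with rfl | ha
    · simpa [hw0] using hloop.symm
    · simpa [ha] using hw0
  · show r (w (if k < a then k else k + d)) (w (if k + 1 < a then k + 1 else k + 1 + d))
    rcases lt_trichotomy (k + 1) a with hka | hka | hka
    · rw [if_pos (by omega), if_pos hka]
      exact hwr k (by omega)
    · rw [if_pos (by omega), if_neg (by omega), hka, ← hloop, ← hka]
      exact hwr k (by omega)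
    · rw [if_neg (by omega), if_neg (by omega), Nat.add_right_comm]
      exact hwr (k + d) (by omega)
  · simpa [show ¬ ℓ - d < a by omega, show ℓ - d + d = ℓ by omega] using hwS

theorem ReachesIn.exists_lt_card [Fintype V] {ℓ : ℕ} {i : V} {S : Set V}
    (h : ReachesIn r ℓ i S) : ∃ m < Fintype.card V, ReachesIn r m i S := by
  induction ℓ using Nat.strong_induction_on with
  | _ ℓ ih =>
    by_cases hℓ : ℓ < Fintype.card V
    · exact ⟨ℓ, hℓ, h⟩
    obtain ⟨w, hw0, hwr, hwS⟩ := h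
    obtain ⟨x, y, hxy, hwxy⟩ := Fintype.exists_ne_map_eq_of_card_lt
      (fun k : Fin (ℓ + 1) => w k) (by simpa using hℓ)
    obtain ⟨a, d, hd, had, hloop⟩ : ∃ a d, 0 < d ∧ a + d ≤ ℓ ∧ w a = w (a + d) := by
      rcases Fin.lt_or_lt_of_ne hxy with hlt | hlt
      · exact ⟨x, y - x, by omega, by omega, by simpa [Nat.add_sub_cancel' hlt.le] using hwxy⟩
      · exact ⟨y, x - y, by omega, by omega, by simpa [Nat.add_sub_cancel' hlt.le] using hwxy.symm⟩
    exact ih (ℓ - d) (by omega) (.of_loop hw0 hwr hwS had hloop)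

end Walks

section Matrix

variable {V : Type*} [Fintype V] [DecidableEq V]

theorem Matrix.sum_pow_apply_eq_one_of_closed {A : Matrix V V ℝ} {T : Set V}
    (hrow : ∀ j ∈ T, ∑ m, A j m = 1) (hclosed : ∀ j ∈ T, ∀ m, A j m ≠ 0 → m ∈ T) (k : ℕ) :
    ∀ j ∈ T, ∑ m, (A ^ k) j m = 1 := by
  induction k with
  | zero => intro j _; simp [Matrix.one_apply]
  | succ k ih =>
    intro j hj
    calc ∑ m, (A ^ (k + 1)) j m = ∑ p, A j p * ∑ m, (A ^ k) p m := by
          simp only [pow_succ', Matrix.mul_apply, Finset.mul_sum]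
          exact Finset.sum_comm
      _ = ∑ p, A j p := by
          refine Finset.sum_congr rfl fun p _ => ?_
          by_cases hp : A j p = 0
          · simp [hp]
          · rw [ih p (hclosed j hj p hp), mul_one]
      _ = 1 := hrow j hj

theorem IsConvergent.exists_reachesIn_jhat {A : Matrix V V ℝ} (hrow : ∀ i, ∑ j, A i j ≤ 1)
    (hconv : IsConvergent A) (i : V) : ∃ ℓ, ReachesIn (fun a b => A a b ≠ 0) ℓ i (Jhat A) := by
  by_contra hi
  set T : Set V := {j | ¬ ∃ ℓ, ReachesIn (fun a b => A a b ≠ 0) ℓ j (Jhat A)}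
  have hrowT : ∀ j ∈ T, ∑ m, A j m = 1 := fun j hj =>
    (hrow j).antisymm (not_lt.1 fun hJ => hj ⟨0, .zero hJ⟩)
  have hclosed : ∀ j ∈ T, ∀ m, A j m ≠ 0 → m ∈ T := fun j hj m hjm ⟨ℓ, hm⟩ =>
    hj ⟨ℓ + 1, .cons hjm hm⟩
  have hsum_tendsto : Tendsto (fun k => ∑ m, (A ^ k) i m) atTop (nhds 0) := by
    have hcont : Continuous fun M : Matrix V V ℝ => ∑ m, M i m :=
      continuous_finsetSum _ fun m _ => continuous_apply_apply i m
    simpa [Function.comp_def] using (hcont.tendsto 0).comp hconv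
  have hsum_one : (fun k => ∑ m, (A ^ k) i m) = fun _ => 1 :=
    funext fun k => Matrix.sum_pow_apply_eq_one_of_closed hrowT hclosed k i hi
  rw [hsum_one] at hsum_tendsto
  exact one_ne_zero (tendsto_nhds_unique tendsto_const_nhds hsum_tendsto)

end Matrix

theorem stmt19 {n : ℕ} (hn : 0 < n) (B : ℕ → Matrix (Fin n) (Fin n) ℝ)
    (hB : ∀ k, IsSubstochastic (B k))
    (hconv : IsConvergent (B 0))
    (hJ : ∀ k, Jhat (B k) = Jhat (B 0))
    (hgraph : ∀ k i j, B k i j ≠ 0 ↔ B 0 i j ≠ 0) :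
    conHatSeqSq B < (n : ℕ∞) := by
  have hshort : ∀ i ∉ Jhat (B 0), ∃ ℓ ∈ seqWalkLengthsSq B i, ℓ ≤ n - 1 := by
    intro i hi
    obtain ⟨ℓ, hℓ⟩ := hconv.exists_reachesIn_jhat (hB 0).2 i
    obtain ⟨m, hmn, w, hw0, hwr, hwS⟩ := hℓ.exists_lt_card
    have hm : 1 ≤ m := Nat.one_le_iff_ne_zero.2 fun hm0 => hi (hw0 ▸ hm0 ▸ hwS)
    refine ⟨m, ⟨hm, w, hw0, fun k hk => (hgraph k _ _).2 (hwr k hk), hJ m ▸ hwS⟩, ?_⟩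
    simpa using Nat.le_sub_one_of_lt hmn
  calc conHatSeqSq B ≤ ((n - 1 : ℕ) : ℕ∞) := iSup₂_le fun i hi => by
        obtain ⟨ℓ, hℓ, hℓn⟩ := hshort i hi
        exact (iInf₂_le ℓ hℓ).trans (by exact_mod_cast hℓn)
    _ < n := by exact_mod_cast Nat.sub_lt hn one_pos
end
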